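/- Let H be a self-similar subgroup of the automorphism group of the infinite rooted binary tree. If some element of H has a stable cycle (in particular, if H contains a settled element), then H contains an odometer. -/

import Mathlib

namespace BinTree

/-- Vertices of the infinite rooted binary tree: finite words over `{0,1}`. -/
abbrev Vertex : Type := List Bool

/-- A function on vertices is a tree automorphism function if it preserves lengths
(levels) and prefixes. -/
def IsTreeAutFun (f : Vertex → Vertex) : Prop :=
  (∀ v, (f v).length = v.length) ∧ ∀ v w : Vertex, (f (v ++ w)).take v.length = f v

/-- `Ω`: the automorphism group of the infinite rooted binary tree, realized as the
subgroup of permutations of the set of vertices preserving the tree structure. -/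
def TreeAut : Subgroup (Equiv.Perm Vertex) where
  carrier := {e | IsTreeAutFun ⇑e}
  one_mem' := ⟨fun _ => rfl, fun v w => by
    simpa using List.take_left (l₁ := v) (l₂ := w)⟩
  mul_mem' := by
    rintro a b ha hb
    obtain ⟨ha1, ha2⟩ := ha
    obtain ⟨hb1, hb2⟩ := hb
    refine ⟨fun v => ?_, fun v w => ?_⟩
    · simp [Equiv.Perm.mul_apply, ha1, hb1]
    · have hb' : b (v ++ w) = b v ++ (b (v ++ w)).drop v.length := by
        conv_lhs => rw [← List.take_append_drop v.length (b (v ++ w)), hb2]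
      have hlen : (b v).length = v.length := hb1 v
      calc ((a * b) (v ++ w)).take v.length
          = (a (b v ++ (b (v ++ w)).drop v.length)).take v.length := by
            rw [Equiv.Perm.mul_apply, ← hb']
        _ = a (b v) := by rw [← hlen]; exact ha2 _ _
        _ = (a * b) v := rfl
  inv_mem' := by
    intro a ha
    obtain ⟨ha1, ha2⟩ := ha
    show IsTreeAutFun ⇑a⁻¹
    have hlen : ∀ v : Vertex, (a⁻¹ v).length = v.length := by
      intro v
      have h := ha1 (a⁻¹ v)
      rw [show ∀ x, a (a⁻¹ x) = x from fun x => a.apply_symm_apply x] at h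
      exact h.symm ▸ rfl
    refine ⟨hlen, fun v w => ?_⟩
    have htl : ((a⁻¹ (v ++ w)).take v.length).length = v.length := by
      rw [List.length_take, hlen, List.length_append]
      omega
    have key : a ((a⁻¹ (v ++ w)).take v.length) = v := by
      have h2 := ha2 ((a⁻¹ (v ++ w)).take v.length) ((a⁻¹ (v ++ w)).drop v.length)
      rw [List.take_append_drop, htl, show ∀ x, a (a⁻¹ x) = x from fun x => a.apply_symm_apply x] at h2
      rw [← h2]
      simpa using List.take_left (l₁ := v) (l₂ := w)
    have h3 := congrArg (⇑a⁻¹) key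
    rwa [show ∀ x, a⁻¹ (a x) = x from fun x => a.symm_apply_apply x] at h3

/-- wreath recursion, forward map: `(g,h)σᵗ` -/
def wrFun (g h : Vertex → Vertex) (t : Bool) : Vertex → Vertex
  | [] => []
  | x :: v => (xor x t) :: (cond x (h v) (g v))

/-- wreath recursion, inverse map -/
def wrFunInv (g h : Vertex → Vertex) (t : Bool) : Vertex → Vertex
  | [] => []
  | y :: w => (xor y t) :: (cond (xor y t) (h w) (g w))

/-- `(g,h)σᵗ` as a permutation of the vertices. -/
def wrPerm (g h : Equiv.Perm Vertex) (t : Bool) : Equiv.Perm Vertex where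
  toFun := wrFun ⇑g ⇑h t
  invFun := wrFunInv ⇑g.symm ⇑h.symm t
  left_inv := by
    intro v
    cases v with
    | nil => rfl
    | cons x v => cases x <;> cases t <;> simp [wrFun, wrFunInv]
  right_inv := by
    intro v
    cases v with
    | nil => rfl
    | cons x v => cases x <;> cases t <;> simp [wrFun, wrFunInv]

/-- The element `(g,h)σᵗ` of `Ω`: acts on the first level by `σᵗ` (where `σ` is the
swap of the two level-one subtrees), with section `g` at the vertex `0` and section
`h` at the vertex `1`.  Thus `(γ₀,γ₁)τ` of the wreath recursion
`Ω ≃ (Ω × Ω) ⋊ S₂` is `wr γ₀ γ₁ t` (`t = true` iff `τ = σ`). -/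
def wr (g h : TreeAut) (t : Bool) : TreeAut :=
  ⟨wrPerm g.1 h.1 t, by
    have hg : IsTreeAutFun ⇑g.1 := g.2
    have hh : IsTreeAutFun ⇑h.1 := h.2
    constructor
    · intro v
      cases v with
      | nil => rfl
      | cons x v =>
        cases x <;> simp [wrPerm, wrFun, hg.1, hh.1]
    · intro v w
      cases v with
      | nil => simp [wrPerm, wrFun]
      | cons x v =>
        cases x <;> simp [wrPerm, wrFun, hg.2, hh.2]⟩

/-- Application of a tree automorphism to a vertex. -/
def ap (γ : TreeAut) (v : Vertex) : Vertex := γ.1 v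

/-- The permutation induced by `γ ∈ Ω` on level `n` of the tree. -/
def levelPerm (n : ℕ) (γ : TreeAut) : Equiv.Perm (List.Vector Bool n) where
  toFun v := ⟨γ.1 v.1, by
    have h : IsTreeAutFun ⇑γ.1 := γ.2
    rw [h.1 v.1]; exact v.2⟩
  invFun v := ⟨γ.1.symm v.1, by
    have h : IsTreeAutFun ⇑γ.1 := γ.2
    have h2 := h.1 (γ.1.symm v.1)
    rw [Equiv.apply_symm_apply] at h2
    exact h2.symm.trans v.2⟩
  left_inv v := Subtype.ext (Equiv.symm_apply_apply _ _)
  right_inv v := Subtype.ext (Equiv.apply_symm_apply _ _)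

/-- Restriction to level `n` as a group homomorphism. -/
def levelHom (n : ℕ) : TreeAut →* Equiv.Perm (List.Vector Bool n) where
  toFun := levelPerm n
  map_one' := Equiv.ext fun v => Subtype.ext rfl
  map_mul' := fun g h => Equiv.ext fun v => Subtype.ext rfl

/-- `sgn_n`: the sign of the permutation induced on level `n`. -/
def sgn (n : ℕ) (γ : TreeAut) : ℤˣ := Equiv.Perm.sign (levelPerm n γ)

/-- An odometer: acts as a single `2^n`-cycle on each level `n ≥ 1`. -/
def IsOdometer (γ : TreeAut) : Prop :=
  ∀ n : ℕ, 1 ≤ n → (levelPerm n γ).IsCycle ∧ (levelPerm n γ).support = Finset.univ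

/-- The profinite topology on `Ω`: the coarsest topology making all level
restrictions (to the discrete finite groups) continuous. -/
instance : TopologicalSpace TreeAut :=
  ⨅ n : ℕ, TopologicalSpace.induced (levelPerm n) ⊥

/-- A vertex `w` is in a stable cycle of `γ` of length `k`: its `γ`-orbit has exactly
`k` elements, and for every level `m` above the level of `w`, all level-`m` vertices
lying above this orbit are in one single `γ`-cycle (necessarily of length
`2^(m - n) * k`, which we record via the periodicity condition). -/
def InStableCycle (γ : TreeAut) (w : Vertex) (k : ℕ) : Prop :=
  0 < k ∧ ap (γ ^ k) w = w ∧ (∀ j : ℕ, 0 < j → j < k → ap (γ ^ j) w ≠ w) ∧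
  (∀ u : Vertex, w.length < u.length → (∃ i : ℕ, u.take w.length = ap (γ ^ i) w) →
    (ap (γ ^ (2 ^ (u.length - w.length) * k)) u = u ∧
      ∀ u' : Vertex, u'.length = u.length →
        (∃ i : ℕ, u'.take w.length = ap (γ ^ i) w) → ∃ j : ℕ, ap (γ ^ j) u = u'))

/-- Self-similar subgroup: closed under taking sections (here the section of `γ` at
the first-level vertex `x` is characterized by `(xv)γ = (x)γ ⬝ (v)γₓ`). -/
def SelfSimilar (H : Subgroup TreeAut) : Prop :=
  ∀ γ ∈ H, ∀ x : Bool, ∀ δ : TreeAut,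
    (∀ v : Vertex, ap γ (x :: v) = ap γ [x] ++ ap δ v) → δ ∈ H


/-!
If `γ ^ k` fixes `w`, the powers of `γ ^ k` act on the subtree below `w` through the powers of
the section `δ = (γ ^ k)_w`, which lies in `H` by self-similarity. Stability of the cycle says
that `⟨γ⟩` is transitive on every level of the subtrees below the orbit of `w`; since the
elements of `⟨γ⟩` fixing `w` are exactly the powers of `γ ^ k`, `δ` is transitive on every level
of the tree, which is what it means to be an odometer.
-/

lemma ap_mul (a b : TreeAut) (v : Vertex) : ap (a * b) v = ap a (ap b v) := rfl

lemma ap_one (v : Vertex) : ap 1 v = v := rfl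

lemma ap_inv_ap (γ : TreeAut) (v : Vertex) : ap γ⁻¹ (ap γ v) = v := γ.1.symm_apply_apply v

lemma ap_length (γ : TreeAut) (v : Vertex) : (ap γ v).length = v.length := γ.2.1 v

lemma take_ap_append (γ : TreeAut) (v u : Vertex) : (ap γ (v ++ u)).take v.length = ap γ v :=
  γ.2.2 v u

lemma ap_injective : Function.Injective ap := fun _ _ h =>
  Subtype.ext (Equiv.ext fun v => congrFun h v)

def secFun (γ : TreeAut) (v u : Vertex) : Vertex := (ap γ (v ++ u)).drop v.length

lemma secFun_length (γ : TreeAut) (v u : Vertex) : (secFun γ v u).length = u.length := by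
  simp [secFun, ap_length]

lemma ap_append_eq_append_secFun (γ : TreeAut) (v u : Vertex) :
    ap γ (v ++ u) = ap γ v ++ secFun γ v u := by
  rw [secFun, ← take_ap_append γ v u, List.take_append_drop]

lemma secFun_one (v u : Vertex) : secFun 1 v u = u := List.drop_left

lemma secFun_mul (a b : TreeAut) (v u : Vertex) :
    secFun (a * b) v u = secFun a (ap b v) (secFun b v u) := by
  rw [secFun, ap_mul, ap_append_eq_append_secFun b, ap_append_eq_append_secFun a,
    List.drop_left' (by rw [ap_length, ap_length])]

lemma secFun_append (γ : TreeAut) (v u u' : Vertex) :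
    secFun γ v (u ++ u') = secFun γ v u ++ secFun γ (v ++ u) u' := by
  rw [secFun, ← List.append_assoc, ap_append_eq_append_secFun γ (v ++ u),
    ap_append_eq_append_secFun γ v, List.append_assoc, List.drop_left' (ap_length γ v)]

def sec (γ : TreeAut) (v : Vertex) : TreeAut :=
  ⟨{ toFun := secFun γ v
     invFun := secFun γ⁻¹ (ap γ v)
     left_inv := fun u => by rw [← secFun_mul, inv_mul_cancel, secFun_one]
     right_inv := fun u => by
       have h := secFun_mul γ γ⁻¹ (ap γ v) u
       rwa [mul_inv_cancel, secFun_one, ap_inv_ap, eq_comm] at h },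
    secFun_length γ v, fun u u' => by
      show (secFun γ v (u ++ u')).take u.length = secFun γ v u
      rw [secFun_append, List.take_left' (secFun_length γ v u)]⟩

lemma ap_append (γ : TreeAut) (v u : Vertex) : ap γ (v ++ u) = ap γ v ++ ap (sec γ v) u :=
  ap_append_eq_append_secFun γ v u

lemma sec_nil (γ : TreeAut) : sec γ [] = γ := ap_injective rfl

lemma sec_append (γ : TreeAut) (v v' : Vertex) : sec γ (v ++ v') = sec (sec γ v) v' := by
  refine ap_injective (funext fun u => ?_)
  show secFun γ (v ++ v') u = (secFun γ v (v' ++ u)).drop v'.length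
  rw [secFun_append, List.drop_left' (secFun_length γ v v')]

lemma SelfSimilar.sec_mem {H : Subgroup TreeAut} (hss : SelfSimilar H) {γ : TreeAut}
    (hγ : γ ∈ H) (v : Vertex) : sec γ v ∈ H := by
  induction v generalizing γ with
  | nil => rwa [sec_nil]
  | cons x v ih =>
    rw [← List.singleton_append, sec_append]
    exact ih (hss γ hγ x _ (ap_append γ [x]))

lemma ap_pow_append_of_ap_eq {g : TreeAut} {w : Vertex} (hw : ap g w = w) (j : ℕ)
    (u : Vertex) : ap (g ^ j) (w ++ u) = w ++ ap (sec g w ^ j) u := by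
  induction j generalizing u with
  | zero => rfl
  | succ j ih => rw [pow_succ, ap_mul, ap_append g, hw, ih, pow_succ, ap_mul]

lemma dvd_of_ap_pow_eq_self {γ : TreeAut} {w : Vertex} {k j : ℕ} (hk : 0 < k)
    (hfix : ap (γ ^ k) w = w) (hmin : ∀ i, 0 < i → i < k → ap (γ ^ i) w ≠ w)
    (hj : ap (γ ^ j) w = w) : k ∣ j := by
  have fixed_iff : ∀ i, ap (γ ^ i) w = w ↔ MulAction.period γ w ∣ i := fun _ =>
    MulAction.pow_smul_eq_iff_period_dvd (m := γ) (a := w)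
  have hperiod : MulAction.period γ w = k := by
    have hdvd := (fixed_iff k).1 hfix
    by_contra hne
    exact hmin _ (Nat.pos_of_dvd_of_pos hdvd hk) (lt_of_le_of_ne (Nat.le_of_dvd hk hdvd) hne)
      ((fixed_iff _).2 dvd_rfl)
  exact hperiod ▸ (fixed_iff j).1 hj

def IsLevelTransitive (δ : TreeAut) : Prop :=
  ∀ u v : Vertex, u.length = v.length → ∃ q : ℕ, ap (δ ^ q) u = v

lemma levelPerm_pow_apply (n : ℕ) (δ : TreeAut) (q : ℕ) (s : List.Vector Bool n) :
    ((levelPerm n δ ^ q) s).1 = ap (δ ^ q) s.1 := by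
  rw [show levelPerm n δ ^ q = levelPerm n (δ ^ q) from (map_pow (levelHom n) δ q).symm]
  rfl

lemma _root_.Equiv.Perm.isCycle_and_support_eq_univ_of_forall_sameCycle {α : Type*}
    [Fintype α] [DecidableEq α] [Nontrivial α] {π : Equiv.Perm α} (h : ∀ x y, π.SameCycle x y) :
    π.IsCycle ∧ π.support = Finset.univ := by
  have hmoved : ∀ x, π x ≠ x := fun x hx =>
    have ⟨y, hy⟩ := exists_ne x
    hy ((h x y).eq_of_left hx).symm
  obtain ⟨x⟩ := ‹Nontrivial α›.to_nonempty
  exact ⟨⟨x, hmoved x, fun y _ => h x y⟩,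
    Finset.eq_univ_iff_forall.2 fun y => Equiv.Perm.mem_support.2 (hmoved y)⟩

lemma IsLevelTransitive.isOdometer {δ : TreeAut} (hδ : IsLevelTransitive δ) :
    IsOdometer δ := by
  intro n hn
  have : Nontrivial (List.Vector Bool n) := Fintype.one_lt_card_iff_nontrivial.1 <| by
    rw [card_vector, Fintype.card_bool]
    exact Nat.one_lt_two_pow (by omega)
  refine Equiv.Perm.isCycle_and_support_eq_univ_of_forall_sameCycle fun s s' => ?_
  obtain ⟨q, hq⟩ := hδ s.1 s'.1 (s.2.trans s'.2.symm)
  exact ⟨q, by rw [zpow_natCast]; exact Subtype.ext ((levelPerm_pow_apply n δ q s).trans hq)⟩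

lemma InStableCycle.isLevelTransitive_sec {γ : TreeAut} {w : Vertex} {k : ℕ}
    (hst : InStableCycle γ w k) : IsLevelTransitive (sec (γ ^ k) w) := by
  obtain ⟨hk, hfix, hmin, hstab⟩ := hst
  intro s s' hlen
  obtain rfl | hs := eq_or_ne s []
  · exact ⟨0, (List.length_eq_zero_iff.1 hlen.symm).symm⟩
  have above_w : ∀ t : Vertex, (w ++ t).take w.length = ap (γ ^ 0) w := fun t => by
    rw [pow_zero, ap_one, List.take_left]
  obtain ⟨j, hj⟩ := (hstab (w ++ s) (by simpa using List.length_pos_iff.2 hs) ⟨0, above_w s⟩).2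
    (w ++ s') (by simp [hlen]) ⟨0, above_w s'⟩
  have hjw : ap (γ ^ j) w = w := by
    rw [← take_ap_append (γ ^ j) w s, hj, List.take_left]
  obtain ⟨q, rfl⟩ := dvd_of_ap_pow_eq_self hk hfix hmin hjw
  have h := ap_pow_append_of_ap_eq hfix q s
  rw [← pow_mul, hj] at h
  exact ⟨q, (List.append_cancel_left h).symm⟩

/-- a self-similar subgroup containing an element with a stable
cycle contains an odometer. -/
theorem self_similar_with_stable_cycle_has_odometer (H : Subgroup TreeAut)
    (hss : SelfSimilar H) (γ : TreeAut) (hγ : γ ∈ H) (w : Vertex) (k : ℕ)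
    (hst : InStableCycle γ w k) :
    ∃ δ ∈ H, IsOdometer δ :=
  ⟨sec (γ ^ k) w, hss.sec_mem (pow_mem hγ k) w, hst.isLevelTransitive_sec.isOdometer⟩

end BinTree
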